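/- For every n ≥ 2 and every subset A of L: (i) if B ⊆ L \ A has cardinality continuum (2^ℵ₀), then B is not z-embedded in (X, τ(A)); (ii) if B ⊆ L \ A is uncountable and closed in L with its Euclidean subspace topology, then the subset L is not z-embedded in (X, τ(A)). -/

import Mathlib

open Metric Set TopologicalSpace

noncomputable section

/-- The last coordinate `x (n-1)` of a point of `EuclideanSpace ℝ (Fin n)`
(junk value `0` if `n = 0`). -/
def lastCoord (n : ℕ) (x : EuclideanSpace ℝ (Fin n)) : ℝ :=
  if h : 0 < n then x ⟨n - 1, Nat.sub_lt h one_pos⟩ else 0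

/-- The closed upper half-space `X = {x : x (n-1) ≥ 0}`. -/
def HalfSpace (n : ℕ) : Set (EuclideanSpace ℝ (Fin n)) := {x | 0 ≤ lastCoord n x}

/-- The open upper half-space `P = {x : x (n-1) > 0}`. -/
def OpenHalf (n : ℕ) : Set (EuclideanSpace ℝ (Fin n)) := {x | 0 < lastCoord n x}

/-- The boundary hyperplane `L = {x : x (n-1) = 0}`. -/
def Bdry (n : ℕ) : Set (EuclideanSpace ℝ (Fin n)) := {x | lastCoord n x = 0}

/-- The `n`-th standard basis vector `e` (junk value `0` if `n = 0`). -/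
def eVec (n : ℕ) : EuclideanSpace ℝ (Fin n) :=
  if h : 0 < n then EuclideanSpace.single ⟨n - 1, Nat.sub_lt h one_pos⟩ (1 : ℝ) else 0

/-- The tangent ball `B̃(a, ε) = {a} ∪ B(a + ε • e, ε)`. -/
def tangentBall (n : ℕ) (a : EuclideanSpace ℝ (Fin n)) (ε : ℝ) :
    Set (EuclideanSpace ℝ (Fin n)) :=
  {a} ∪ ball (a + ε • eVec n) ε

/-- The generating family for the topology `τ(A)` on `X`:
balls `B(a,ε)` with `a ∈ P`, `0 < ε < a (n-1)`; traces `B(a,ε) ∩ X` with `a ∈ A`, `ε > 0`;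
and tangent balls `B̃(a,ε)` with `a ∈ L \ A`, `ε > 0`. -/
def niemGen (n : ℕ) (A : Set (EuclideanSpace ℝ (Fin n))) : Set (Set (HalfSpace n)) :=
  {s | ∃ a ∈ OpenHalf n, ∃ ε, 0 < ε ∧ ε < lastCoord n a ∧
      s = Subtype.val ⁻¹' ball a ε} ∪
  {s | ∃ a ∈ A, ∃ ε, 0 < ε ∧ s = Subtype.val ⁻¹' ball a ε} ∪
  {s | ∃ a ∈ Bdry n \ A, ∃ ε, 0 < ε ∧ s = Subtype.val ⁻¹' tangentBall n a ε}

/-- The topology `τ(A)` on `X`; `τ(∅)` is the Niemytzki topology `τ_N`. -/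
def tau (n : ℕ) (A : Set (EuclideanSpace ℝ (Fin n))) : TopologicalSpace (HalfSpace n) :=
  generateFrom (niemGen n A)

/-- The inclusion of `L` into `X`. -/
def inclLX (n : ℕ) (x : Bdry n) : HalfSpace n := ⟨x.1, le_of_eq x.2.symm⟩

/-- The subspace topology `τ(A)|_L` on `L` induced from `(X, τ(A))`. -/
def tauL (n : ℕ) (A : Set (EuclideanSpace ℝ (Fin n))) : TopologicalSpace (Bdry n) :=
  TopologicalSpace.induced (inclLX n) (tau n A)

/-- A space is perfect if every closed set is a `Gδ`-set. -/
def IsPerfectSpace (X : Type*) [TopologicalSpace X] : Prop :=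
  ∀ s : Set X, IsClosed s → IsGδ s

/-- An `Fσ`-set: a countable union of closed sets. -/
def IsFsigma {X : Type*} [TopologicalSpace X] (s : Set X) : Prop :=
  ∃ F : ℕ → Set X, (∀ i, IsClosed (F i)) ∧ s = ⋃ i, F i

/-- Countably paracompact: every countable open cover admits a locally finite open refinement. -/
def CountablyParacompact (X : Type*) [TopologicalSpace X] : Prop :=
  ∀ u : ℕ → Set X, (∀ i, IsOpen (u i)) → (⋃ i, u i) = Set.univ →
    ∃ (ι : Type) (v : ι → Set X), (∀ j, IsOpen (v j)) ∧ (⋃ j, v j) = Set.univ ∧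
      LocallyFinite v ∧ ∀ j, ∃ i, v j ⊆ u i

/-- A zero set: the zero locus of a continuous real-valued function. -/
def IsZeroSet {X : Type*} [TopologicalSpace X] (s : Set X) : Prop :=
  ∃ f : X → ℝ, Continuous f ∧ s = f ⁻¹' {0}

/-- `Y` is z-embedded in `X` if every zero set of the subspace `Y`
is the trace on `Y` of a zero set of `X`. -/
def ZEmbedded {X : Type*} [TopologicalSpace X] (Y : Set X) : Prop :=
  ∀ s : Set Y, IsZeroSet s → ∃ Z : Set X, IsZeroSet Z ∧ s = Subtype.val ⁻¹' Z

/-- `Y` is `C*`-embedded in `X` if every bounded continuous real-valued function on the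
subspace `Y` extends to a bounded continuous function on `X`. -/
def CStarEmbedded {X : Type*} [TopologicalSpace X] (Y : Set X) : Prop :=
  ∀ f : Y → ℝ, Continuous f → (∃ M, ∀ y, |f y| ≤ M) →
    ∃ g : X → ℝ, Continuous g ∧ (∃ M, ∀ x, |g x| ≤ M) ∧ ∀ y : Y, g ↑y = f y
end

/-! Every point of `L \ A` is isolated in `L` for `τ(A)`: a tangent ball meets `L` only in its
point of tangency. Hence every subset of a set `S ⊆ L \ A` that is closed in a subspace `Y ⊆ L`
is clopen in `Y`, so a zero set of `Y`. On the other hand `(X, τ(A))` is separable: each point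
`x` is the `τ(A)`-limit of `x + t e` as `t → 0⁺`, and near points of `P` the topology is
Euclidean. So a continuous function on `X` is determined by its values on a countable set, and
`X` has at most `𝔠` zero sets. If `Y` were z-embedded, the `2 ^ |S|` subsets of `S` would inject
into them, which fails once `|S| ≥ 𝔠`. In (ii), `|B| = 𝔠` because an uncountable closed subset of
a Polish space contains a Cantor set. -/

open Cardinal Filter Function Topology

section ZeroSets

variable {X : Type*} [TopologicalSpace X]

theorem IsClopen.isZeroSet {s : Set X} (hs : IsClopen s) : IsZeroSet s :=
  ⟨sᶜ.indicator 1, hs.compl.continuous_indicator continuous_const, by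
    ext x; by_cases hx : x ∈ s <;> simp [hx]⟩

theorem mk_zeroSets_le_continuum [SeparableSpace X] : #{Z : Set X // IsZeroSet Z} ≤ 𝔠 := by
  obtain ⟨D, hD_countable, hD_dense⟩ := exists_countable_dense X
  choose f hf hfZ using fun Z : {Z : Set X // IsZeroSet Z} => Z.2
  have hinj : Injective fun Z => D.domRestrict (f Z) := fun Z W h =>
    Subtype.ext <| by
      rw [hfZ Z, hfZ W, (hf Z).ext_on hD_dense (hf W) fun x hx => congrFun h ⟨x, hx⟩]
  calc #{Z : Set X // IsZeroSet Z} ≤ #(D → ℝ) := mk_le_of_injective hinj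
    _ = 𝔠 ^ lift.{0} #D := by rw [mk_arrow, mk_real, lift_continuum]
    _ ≤ 𝔠 ^ ℵ₀ := power_le_power_left continuum_ne_zero (by simpa using hD_countable.le_aleph0)
    _ = 𝔠 := continuum_power_aleph0

theorem not_zEmbedded_of_continuum_le_mk [SeparableSpace X] {Y : Set X} {S : Set Y}
    (hS : IsClosed S) (hS_isolated : ∀ y ∈ S, IsOpen ({y} : Set Y)) (hmk : 𝔠 ≤ #S) :
    ¬ ZEmbedded Y := by
  intro hY
  have hopen : ∀ U ⊆ S, IsOpen U := fun U hU => isOpen_iff_forall_mem_open.2 fun y hy =>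
    ⟨{y}, singleton_subset_iff.2 hy, hS_isolated y (hU hy), rfl⟩
  have hclopen : ∀ U ⊆ S, IsClopen U := fun U hU =>
    ⟨sdiff_sdiff_cancel_left hU ▸ hS.sdiff (hopen _ sdiff_subset), hopen U hU⟩
  choose Z hZ hTZ using fun T : Set S =>
    hY _ (hclopen (Subtype.val '' T) (Subtype.coe_image_subset S T)).isZeroSet
  have hinj : Injective fun T : Set S => (⟨Z T, hZ T⟩ : {Z : Set X // IsZeroSet Z}) :=
    fun T T' h => Subtype.val_injective.image_injective <| by
      rw [hTZ, hTZ, show Z T = Z T' from congrArg Subtype.val h]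
  have : (2 : Cardinal) ^ 𝔠 ≤ 𝔠 := calc
    (2 : Cardinal) ^ 𝔠 ≤ 2 ^ #S := power_le_power_left two_ne_zero hmk
    _ = #(Set S) := mk_set.symm
    _ ≤ #{Z : Set X // IsZeroSet Z} := mk_le_of_injective hinj
    _ ≤ 𝔠 := mk_zeroSets_le_continuum
  exact (cantor 𝔠).not_ge this

end ZeroSets

theorem continuum_le_mk_of_isClosed_of_not_countable {α : Type*} [TopologicalSpace α]
    [PolishSpace α] {C : Set α} (hC : IsClosed C) (hC_unc : ¬ C.Countable) : 𝔠 ≤ #C := by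
  obtain ⟨f, hfC, -, hf⟩ := hC.exists_nat_bool_injection_of_not_countable hC_unc
  have := lift_mk_le_lift_mk_of_injective (β := C) (f := codRestrict f C (range_subset_iff.1 hfC))
    (hf.codRestrict _)
  simpa [mk_arrow, lift_continuum] using this

section HalfSpaceGeometry

variable {n : ℕ}

theorem lipschitzWith_lastCoord : LipschitzWith 1 (lastCoord n) :=
  LipschitzWith.of_dist_le_mul fun x y => by
    unfold lastCoord
    split_ifs
    · simpa using PiLp.dist_apply_le x y _
    · simp

theorem isOpen_openHalf : IsOpen (OpenHalf n) :=
  isOpen_lt continuous_const lipschitzWith_lastCoord.continuous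

theorem isClosed_bdry : IsClosed (Bdry n) :=
  isClosed_eq lipschitzWith_lastCoord.continuous continuous_const

variable (hn : 0 < n)
include hn

theorem lastCoord_add_smul_eVec (a : EuclideanSpace ℝ (Fin n)) (t : ℝ) :
    lastCoord n (a + t • eVec n) = lastCoord n a + t := by
  simp [lastCoord, eVec, hn]

theorem dist_add_smul_eVec (a : EuclideanSpace ℝ (Fin n)) (s t : ℝ) :
    dist (a + s • eVec n) (a + t • eVec n) = |s - t| := by
  rw [dist_add_left, dist_eq_norm, ← sub_smul, norm_smul, eVec, dif_pos hn,
    PiLp.norm_single, norm_one, mul_one, Real.norm_eq_abs]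

theorem ball_add_smul_eVec_subset_openHalf {a : EuclideanSpace ℝ (Fin n)} {ε : ℝ}
    (ha : 0 ≤ lastCoord n a) : ball (a + ε • eVec n) ε ⊆ OpenHalf n := fun y hy => by
  have h : |lastCoord n y - (lastCoord n a + ε)| < ε := by
    rw [← lastCoord_add_smul_eVec hn, ← Real.dist_eq]
    simpa using (lipschitzWith_lastCoord.dist_le_mul _ _).trans_lt (by simpa using hy)
  show 0 < lastCoord n y
  linarith [(abs_lt.1 h).1]

theorem eq_of_mem_tangentBall_of_mem_bdry {a y : EuclideanSpace ℝ (Fin n)} {ε : ℝ}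
    (ha : a ∈ Bdry n) (hy : y ∈ tangentBall n a ε) (hyL : y ∈ Bdry n) : y = a := by
  rcases hy with rfl | hy
  · rfl
  · exact absurd hyL (ball_add_smul_eVec_subset_openHalf hn (ge_of_eq ha) hy).ne'

theorem tangentBall_subset_ball {a : EuclideanSpace ℝ (Fin n)} {ε : ℝ} (hε : 0 < ε) :
    tangentBall n a ε ⊆ ball a (2 * ε) := by
  rintro y (rfl | hy)
  · exact mem_ball_self (by positivity)
  · calc dist y a ≤ dist y (a + ε • eVec n) + dist (a + ε • eVec n) (a + (0 : ℝ) • eVec n) :=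
          by simpa using dist_triangle y (a + ε • eVec n) a
      _ < ε + ε := by
          rw [dist_add_smul_eVec hn, sub_zero, abs_of_pos hε]
          linarith [mem_ball.1 hy]
      _ = 2 * ε := by ring

end HalfSpaceGeometry

section Tau

variable {n : ℕ} {A : Set (EuclideanSpace ℝ (Fin n))}

theorem comap_val_nhds_le_nhds_tau {x : HalfSpace n} (hx : x.1 ∈ OpenHalf n) :
    comap Subtype.val (𝓝 x.1) ≤ @nhds _ (tau n A) x := by
  refine tendsto_id'.1 (tendsto_nhds_generateFrom_iff.2 ?_)
  rintro s ((⟨a, -, ε, -, -, rfl⟩ | ⟨a, -, ε, -, rfl⟩) | ⟨a, ⟨ha, -⟩, ε, -, rfl⟩) hxs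
  · exact preimage_mem_comap (isOpen_ball.mem_nhds hxs)
  · exact preimage_mem_comap (isOpen_ball.mem_nhds hxs)
  · rcases hxs with hxa | hxb
    · exact absurd (hxa ▸ ha : lastCoord n x.1 = 0) hx.ne'
    · exact mem_of_superset (preimage_mem_comap (isOpen_ball.mem_nhds hxb)) fun y hy => Or.inr hy

variable (hn : 0 < n)
include hn

theorem dense_openHalf_tau : @Dense _ (tau n A) (Subtype.val ⁻¹' OpenHalf n) := by
  let _ : TopologicalSpace (HalfSpace n) := tau n A
  intro x
  let γ : ℝ → HalfSpace n := fun t => ⟨x.1 + |t| • eVec n, by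
    show 0 ≤ lastCoord n _
    rw [lastCoord_add_smul_eVec hn]
    exact add_nonneg x.2 (abs_nonneg t)⟩
  have hγ_euclid : Tendsto (fun t : ℝ => x.1 + |t| • eVec n) (𝓝[>] 0) (𝓝 x.1) :=
    ((continuous_const.add (continuous_abs.smul continuous_const)).tendsto' 0 x.1
      (by simp)).mono_left nhdsWithin_le_nhds
  refine mem_closure_of_tendsto (f := γ) (b := 𝓝[>] 0) (tendsto_nhds_generateFrom_iff.2 ?_)
    (eventually_mem_nhdsWithin.mono fun t (ht : 0 < t) => ?_)
  · rintro s ((⟨a, -, ε, -, -, rfl⟩ | ⟨a, -, ε, -, rfl⟩) | ⟨a, -, ε, hε, rfl⟩) hxs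
    · exact hγ_euclid (isOpen_ball.mem_nhds hxs)
    · exact hγ_euclid (isOpen_ball.mem_nhds hxs)
    · rcases hxs with hxa | hxb
      · filter_upwards [Ioo_mem_nhdsGT hε] with t ht
        show x.1 + |t| • eVec n ∈ tangentBall n a ε
        right
        rw [mem_singleton_iff.1 hxa, mem_ball, dist_add_smul_eVec hn, abs_of_pos ht.1,
          abs_of_neg (by linarith [ht.2])]
        linarith [ht.1]
      · exact mem_of_superset (hγ_euclid (isOpen_ball.mem_nhds hxb)) fun t ht => Or.inr ht
  · show 0 < lastCoord n (x.1 + |t| • eVec n)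
    rw [lastCoord_add_smul_eVec hn, abs_of_pos ht]
    exact add_pos_of_nonneg_of_pos x.2 ht

theorem separableSpace_tau : @SeparableSpace _ (tau n A) := by
  let _ : TopologicalSpace (HalfSpace n) := tau n A
  obtain ⟨c, hc, hc_dense⟩ := exists_countable_dense (EuclideanSpace ℝ (Fin n))
  refine ⟨⟨Subtype.val ⁻¹' c, hc.preimage Subtype.val_injective, ?_⟩⟩
  refine dense_iff_inter_open.2 fun U hU hU_ne => ?_
  obtain ⟨p, hpU, hpP⟩ := (dense_openHalf_tau hn).inter_open_nonempty U hU hU_ne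
  obtain ⟨V, hV, hVU⟩ := mem_comap.1 (comap_val_nhds_le_nhds_tau hpP (hU.mem_nhds hpU))
  obtain ⟨q, hqc, hqV, hqP⟩ :=
    hc_dense.inter_nhds_nonempty (inter_mem hV (isOpen_openHalf.mem_nhds hpP))
  exact ⟨⟨q, (show 0 < lastCoord n q from hqP).le⟩, hVU hqV, hqc⟩

theorem continuous_val_tau : Continuous[tau n A, _] (Subtype.val : HalfSpace n → _) := by
  let _ : TopologicalSpace (HalfSpace n) := tau n A
  refine continuous_iff_continuousAt.2 fun x =>
    nhds_basis_ball.tendsto_right_iff.2 fun ε hε => ?_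
  suffices ∃ s ∈ niemGen n A, x ∈ s ∧ s ⊆ Subtype.val ⁻¹' ball x.1 ε by
    obtain ⟨s, hs, hxs, hsε⟩ := this
    exact mem_of_superset ((isOpen_generateFrom_of_mem hs).mem_nhds hxs) hsε
  rcases (show 0 ≤ lastCoord n x.1 from x.2).lt_or_eq with hpos | hzero
  · have hδ : 0 < min ε (lastCoord n x.1) / 2 := by positivity
    refine ⟨_, Or.inl (Or.inl ⟨x.1, hpos, _, hδ, ?_, rfl⟩), mem_ball_self hδ,
      preimage_mono (ball_subset_ball ?_)⟩
    · linarith [min_le_right ε (lastCoord n x.1)]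
    · linarith [min_le_left ε (lastCoord n x.1)]
  · by_cases hxA : x.1 ∈ A
    · exact ⟨_, Or.inl (Or.inr ⟨x.1, hxA, ε, hε, rfl⟩), mem_ball_self hε, subset_rfl⟩
    · refine ⟨_, Or.inr ⟨x.1, ⟨hzero.symm, hxA⟩, ε / 2, half_pos hε, rfl⟩, Or.inl rfl,
        preimage_mono ?_⟩
      simpa [mul_div_cancel₀] using tangentBall_subset_ball hn (a := x.1) (half_pos hε)

theorem isOpen_singleton_tau {Y : Set (HalfSpace n)} (hY : ∀ y ∈ Y, y.1 ∈ Bdry n) {y : Y}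
    (hyA : y.1.1 ∉ A) : IsOpen[(tau n A).induced Subtype.val] {y} := by
  let _ : TopologicalSpace (HalfSpace n) := tau n A
  refine isOpen_induced_iff.2 ⟨_, isOpen_generateFrom_of_mem
    (Or.inr ⟨y.1.1, ⟨hY y y.2, hyA⟩, 1, one_pos, rfl⟩), ?_⟩
  ext z
  refine ⟨fun hz => Subtype.ext (Subtype.ext ?_), fun hz => mem_singleton_iff.1 hz ▸ Or.inl rfl⟩
  exact eq_of_mem_tangentBall_of_mem_bdry hn (hY y y.2) hz (hY z z.2)

end Tau

theorem tauA_not_zEmbedded_general (n : ℕ) (hn : 2 ≤ n)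
    (A : Set (EuclideanSpace ℝ (Fin n))) :
    (∀ B : Set (EuclideanSpace ℝ (Fin n)), B ⊆ Bdry n \ A →
      Cardinal.mk B = Cardinal.continuum →
      ¬ @ZEmbedded (HalfSpace n) (tau n A) (Subtype.val ⁻¹' B)) ∧
    (∀ B : Set (EuclideanSpace ℝ (Fin n)), B ⊆ Bdry n \ A → ¬ B.Countable →
      IsClosed (Subtype.val ⁻¹' B : Set (Bdry n)) →
      ¬ @ZEmbedded (HalfSpace n) (tau n A) (Subtype.val ⁻¹' Bdry n)) := by
  have hn₀ : 0 < n := by omega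
  let _ : TopologicalSpace (HalfSpace n) := tau n A
  have := separableSpace_tau (A := A) hn₀
  refine ⟨fun B hB hB_card => ?_, fun B hB hB_unc hB_closed => ?_⟩
  · refine not_zEmbedded_of_continuum_le_mk (S := univ) isClosed_univ
      (fun y _ => isOpen_singleton_tau hn₀ (fun z hz => (hB hz).1) (hB y.2).2) ?_
    rw [mk_univ, mk_preimage_of_injective_of_subset_range (Subtype.val : HalfSpace n → _) B
      Subtype.val_injective fun b hb => ⟨⟨b, (hB hb).1.symm.le⟩, rfl⟩, hB_card]
  · have hBL : B ⊆ Bdry n := fun b hb => (hB hb).1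
    have hB_isClosed : IsClosed B := by
      simpa [inter_eq_right.2 hBL] using isClosed_bdry.isClosedMap_subtype_val _ hB_closed
    refine not_zEmbedded_of_continuum_le_mk
      (S := (fun y : (Subtype.val ⁻¹' Bdry n : Set (HalfSpace n)) => y.1.1) ⁻¹' B)
      (hB_isClosed.preimage ((continuous_val_tau hn₀).comp continuous_subtype_val))
      (fun y hy => isOpen_singleton_tau hn₀ (fun z hz => hz) (hB hy).2) ?_
    rw [mk_preimage_of_injective_of_subset_range
      (fun y : (Subtype.val ⁻¹' Bdry n : Set (HalfSpace n)) => y.1.1) B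
      (Subtype.val_injective.comp Subtype.val_injective)
      fun b hb => ⟨⟨⟨b, (hBL hb).symm.le⟩, (hBL hb : b ∈ Bdry n)⟩, rfl⟩]
    exact continuum_le_mk_of_isClosed_of_not_countable hB_isClosed hB_unc

/-- For every `n ≥ 2` and `A ⊆ L`: (i) any `B ⊆ L \ A` of cardinality continuum is not
z-embedded in `(X, τ(A))`; (ii) if some `B ⊆ L \ A` is uncountable and closed in the Euclidean
topology of `L`, then `L` is not z-embedded in `(X, τ(A))`. -/
theorem tauA_not_zEmbedded (n : ℕ) (hn : 2 ≤ n)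
    (A : Set (EuclideanSpace ℝ (Fin n))) (hA : A ⊆ Bdry n) :
    (∀ B : Set (EuclideanSpace ℝ (Fin n)), B ⊆ Bdry n \ A →
      Cardinal.mk B = Cardinal.continuum →
      ¬ @ZEmbedded (HalfSpace n) (tau n A) (Subtype.val ⁻¹' B)) ∧
    (∀ B : Set (EuclideanSpace ℝ (Fin n)), B ⊆ Bdry n \ A → ¬ B.Countable →
      IsClosed (Subtype.val ⁻¹' B : Set (Bdry n)) →
      ¬ @ZEmbedded (HalfSpace n) (tau n A) (Subtype.val ⁻¹' Bdry n)) :=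
  tauA_not_zEmbedded_general n hn A
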